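/- arXiv:1803.07683 — 10 statements merged into one kernel-verified Lean document; each statement's English description precedes it below -/
import Mathlib

section
/- For every ONE-IN-THREE 3SAT instance φ, the function s_φ is nonnegative on ℝ^n, and there exists x ∈ ℝ^n with s_φ(x) = 0 if and only if φ is satisfiable. -/
open Finset Filter

/-- Sign of a literal: `1` if positive, `-1` if negated. -/
noncomputable def Eps (c : Bool) : ℝ := if c then 1 else -1

/-- A ONE-IN-THREE 3SAT instance, encoded by a variable-index map `v` and a sign map `b`,
is satisfiable if some Boolean assignment makes exactly one literal true in each clause. -/
def OneInThreeSat {n k : ℕ} (v : Fin k → Fin 3 → Fin n) (b : Fin k → Fin 3 → Bool) : Prop :=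
  ∃ a : Fin n → Bool, ∀ i : Fin k, ∃! t : Fin 3, a (v i t) = b i t

/-- The quartic polynomial `s_φ` associated with a ONE-IN-THREE 3SAT instance. -/
noncomputable def sPhi {n k : ℕ} (v : Fin k → Fin 3 → Fin n) (b : Fin k → Fin 3 → Bool)
    (x : Fin n → ℝ) : ℝ :=
  (∑ i : Fin k,
    (Eps (b i 0) * x (v i 0) + Eps (b i 1) * x (v i 1) + Eps (b i 2) * x (v i 2) + 1) ^ 2)
  + ∑ j : Fin n, (1 - x j ^ 2) ^ 2

lemma triple_sum_zero (r s u : ℝ)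
    (hr : r = 1 ∨ r = -1) (hs : s = 1 ∨ s = -1) (hu : u = 1 ∨ u = -1) :
    r + s + u + 1 = 0 ↔
      ((r = 1 ∧ s = -1 ∧ u = -1) ∨ (r = -1 ∧ s = 1 ∧ u = -1) ∨
        (r = -1 ∧ s = -1 ∧ u = 1)) := by
  rcases hr with h | h <;> rcases hs with h' | h' <;> rcases hu with h'' | h'' <;>
    subst h <;> subst h' <;> subst h'' <;> norm_num

lemma eps_match (c : Bool) (y : ℝ) (hy : y = 1 ∨ y = -1) :
    (Eps c * y = 1 ↔ decide (y = 1) = c) ∧ (Eps c * y = 1 ∨ Eps c * y = -1) := by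
  cases c <;> rcases hy with h | h <;> subst h <;> simp [Eps] <;> norm_num

theorem sPhi_nonneg_and_zero_iff_satisfiable {n k : ℕ}
    (v : Fin k → Fin 3 → Fin n) (b : Fin k → Fin 3 → Bool) :
    (∀ x : Fin n → ℝ, 0 ≤ sPhi v b x) ∧
    ((∃ x : Fin n → ℝ, sPhi v b x = 0) ↔ OneInThreeSat v b) := by
  constructor
  · intro x
    unfold sPhi
    apply add_nonneg <;> apply Finset.sum_nonneg <;> intro i _ <;> positivity
  constructor
  · rintro ⟨x, hx⟩
    unfold sPhi at hx
    have hA : (0:ℝ) ≤ ∑ i : Fin k,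
        (Eps (b i 0) * x (v i 0) + Eps (b i 1) * x (v i 1) + Eps (b i 2) * x (v i 2) + 1) ^ 2 :=
      Finset.sum_nonneg fun i _ => sq_nonneg _
    have hB : (0:ℝ) ≤ ∑ j : Fin n, (1 - x j ^ 2) ^ 2 :=
      Finset.sum_nonneg fun j _ => sq_nonneg _
    have hA0 : ∑ i : Fin k,
        (Eps (b i 0) * x (v i 0) + Eps (b i 1) * x (v i 1) + Eps (b i 2) * x (v i 2) + 1) ^ 2 = 0 := by
      linarith
    have hB0 : ∑ j : Fin n, (1 - x j ^ 2) ^ 2 = 0 := by linarith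
    have hxj : ∀ j : Fin n, x j = 1 ∨ x j = -1 := by
      intro j
      have := (Finset.sum_eq_zero_iff_of_nonneg (fun j _ => sq_nonneg _)).mp hB0 j (by simp)
      have h2 : x j ^ 2 = 1 := by nlinarith [sq_nonneg (1 - x j ^ 2)]
      have : x j * x j = 1 := by nlinarith
      exact mul_self_eq_one_iff.mp this
    refine ⟨fun j => decide (x j = 1), fun i => ?_⟩
    have hi := (Finset.sum_eq_zero_iff_of_nonneg (fun i _ => sq_nonneg _)).mp hA0 i (by simp)
    have hsum : Eps (b i 0) * x (v i 0) + Eps (b i 1) * x (v i 1) + Eps (b i 2) * x (v i 2) + 1 = 0 := by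
      nlinarith [sq_nonneg (Eps (b i 0) * x (v i 0) + Eps (b i 1) * x (v i 1) + Eps (b i 2) * x (v i 2) + 1)]
    have e0 := eps_match (b i 0) (x (v i 0)) (hxj _)
    have e1 := eps_match (b i 1) (x (v i 1)) (hxj _)
    have e2 := eps_match (b i 2) (x (v i 2)) (hxj _)
    have htri := (triple_sum_zero _ _ _ e0.2 e1.2 e2.2).mp hsum
    have neg_ne : ∀ (c : Bool) (y : ℝ), Eps c * y = -1 → ¬ (Eps c * y = 1) := by
      intro c y h h'; rw [h'] at h; norm_num at h
    rcases htri with ⟨h0, h1, h2⟩ | ⟨h0, h1, h2⟩ | ⟨h0, h1, h2⟩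
    · refine ⟨0, e0.1.mp h0, fun t ht => ?_⟩
      fin_cases t
      · rfl
      · exact absurd (e1.1.mpr ht) (neg_ne _ _ h1)
      · exact absurd (e2.1.mpr ht) (neg_ne _ _ h2)
    · refine ⟨1, e1.1.mp h1, fun t ht => ?_⟩
      fin_cases t
      · exact absurd (e0.1.mpr ht) (neg_ne _ _ h0)
      · rfl
      · exact absurd (e2.1.mpr ht) (neg_ne _ _ h2)
    · refine ⟨2, e2.1.mp h2, fun t ht => ?_⟩
      fin_cases t
      · exact absurd (e0.1.mpr ht) (neg_ne _ _ h0)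
      · exact absurd (e1.1.mpr ht) (neg_ne _ _ h1)
      · rfl
  · rintro ⟨a, ha⟩
    refine ⟨fun j => if a j then 1 else -1, ?_⟩
    unfold sPhi
    have hx : ∀ j : Fin n, (if a j then (1:ℝ) else -1) = 1 ∨ (if a j then (1:ℝ) else -1) = -1 := by
      intro j; by_cases h : a j <;> simp [h]
    have hval : ∀ (c : Bool) (j : Fin n),
        Eps c * (if a j then (1:ℝ) else -1) = if a j = c then 1 else -1 := by
      intro c j; cases c <;> by_cases h : a j <;> simp [Eps, h]
    have hB0 : ∑ j : Fin n, (1 - (if a j then (1:ℝ) else -1) ^ 2) ^ 2 = 0 := by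
      apply Finset.sum_eq_zero; intro j _; rcases hx j with h | h <;> rw [h] <;> norm_num
    have hA0 : ∑ i : Fin k,
        (Eps (b i 0) * (if a (v i 0) then (1:ℝ) else -1) +
          Eps (b i 1) * (if a (v i 1) then (1:ℝ) else -1) +
          Eps (b i 2) * (if a (v i 2) then (1:ℝ) else -1) + 1) ^ 2 = 0 := by
      apply Finset.sum_eq_zero; intro i _
      obtain ⟨t, ht, huniq⟩ := ha i
      rw [hval, hval, hval]
      have key : ∀ s : Fin 3, (if a (v i s) = b i s then (1:ℝ) else -1) =
          if s = t then 1 else -1 := by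
        intro s
        by_cases hs : s = t
        · subst hs; simp [ht]
        · have : ¬ (a (v i s) = b i s) := fun h => hs (huniq s h)
          simp [this, hs]
      rw [key 0, key 1, key 2]
      fin_cases t <;> norm_num [Fin.ext_iff]
    rw [hA0, hB0]; norm_num
end

section
/- For every ONE-IN-THREE 3SAT instance φ, the function p_φ is nonnegative on ℝ^n × ℝ × ℝ × ℝ and 0 is the greatest lower bound of its range (i.e., IsGLB (Set.range p_φ) 0); this holds regardless of whether φ is satisfiable. -/
open Finset Filter

/-- The polynomial `p_φ(x, y, z, λ) = λ²·s_φ(x) + (1-λ)²·(y² + (y·z - 1)²)`. -/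
noncomputable def pPhi {n k : ℕ} (v : Fin k → Fin 3 → Fin n) (b : Fin k → Fin 3 → Bool) :
    (Fin n → ℝ) × ℝ × ℝ × ℝ → ℝ := fun q =>
  q.2.2.2 ^ 2 * sPhi v b q.1 +
    (1 - q.2.2.2) ^ 2 * (q.2.1 ^ 2 + (q.2.1 * q.2.2.1 - 1) ^ 2)

theorem pPhi_nonneg_and_isGLB_zero {n k : ℕ}
    (v : Fin k → Fin 3 → Fin n) (b : Fin k → Fin 3 → Bool) :
    (∀ q : (Fin n → ℝ) × ℝ × ℝ × ℝ, 0 ≤ pPhi v b q) ∧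
    IsGLB (Set.range (pPhi v b)) 0 := by
  have hs : ∀ x : Fin n → ℝ, 0 ≤ sPhi v b x := by
    intro x
    unfold sPhi
    have h1 : (0:ℝ) ≤ ∑ i : Fin k,
        (Eps (b i 0) * x (v i 0) + Eps (b i 1) * x (v i 1) + Eps (b i 2) * x (v i 2) + 1) ^ 2 :=
      Finset.sum_nonneg fun i _ => sq_nonneg _
    have h2 : (0:ℝ) ≤ ∑ j : Fin n, (1 - x j ^ 2) ^ 2 :=
      Finset.sum_nonneg fun j _ => sq_nonneg _
    linarith
  have hnn : ∀ q : (Fin n → ℝ) × ℝ × ℝ × ℝ, 0 ≤ pPhi v b q := by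
    intro q
    unfold pPhi
    have := hs q.1
    positivity
  refine ⟨hnn, ⟨?_, ?_⟩⟩
  · rintro r ⟨q, rfl⟩
    exact hnn q
  · intro w hw
    by_contra hw0
    push_neg at hw0
    -- for each t > 0, pPhi at (0, t, 1/t, 0) = t^2
    have key : ∀ t : ℝ, 0 < t → w ≤ t ^ 2 := by
      intro t ht
      have hmem : t ^ 2 ∈ Set.range (pPhi v b) := by
        refine ⟨⟨fun _ => 0, t, 1 / t, 0⟩, ?_⟩
        unfold pPhi
        simp [ht.ne']
      exact hw hmem
    have h := key (Real.sqrt w / 2) (by positivity)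
    have hsq : Real.sqrt w ^ 2 = w := Real.sq_sqrt hw0.le
    nlinarith [Real.sqrt_nonneg w]
end

section
/- For every ONE-IN-THREE 3SAT instance φ, there exists a point (x, y, z, λ) ∈ ℝ^n × ℝ × ℝ × ℝ with p_φ(x, y, z, λ) = 0 (equivalently, p_φ attains its infimum, which equals 0) if and only if φ is satisfiable. -/
open Finset Filter

lemma eps_mul_one_iff (c d : Bool) :
    Eps c * (if d then (1:ℝ) else -1) = 1 ↔ d = c := by
  cases c <;> cases d <;> norm_num [Eps]

lemma eps_mul_mem (c d : Bool) :
    Eps c * (if d then (1:ℝ) else -1) = 1 ∨ Eps c * (if d then (1:ℝ) else -1) = -1 := by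
  cases c <;> cases d <;> norm_num [Eps]

lemma key1 (u : Fin 3 → ℝ) (hu : ∀ t, u t = 1 ∨ u t = -1)
    (hs : u 0 + u 1 + u 2 + 1 = 0) : ∃! t : Fin 3, u t = 1 := by
  rcases hu 0 with h0 | h0 <;> rcases hu 1 with h1 | h1 <;> rcases hu 2 with h2 | h2
  all_goals first
    | exact ⟨0, h0, fun t ht => by fin_cases t <;> simp_all <;> linarith⟩
    | exact ⟨1, h1, fun t ht => by fin_cases t <;> simp_all <;> linarith⟩
    | exact ⟨2, h2, fun t ht => by fin_cases t <;> simp_all <;> linarith⟩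
    | (rw [h0, h1, h2] at hs; norm_num at hs)

lemma key2 (u : Fin 3 → ℝ) (hu : ∀ t, u t = 1 ∨ u t = -1)
    (h : ∃! t : Fin 3, u t = 1) : u 0 + u 1 + u 2 + 1 = 0 := by
  obtain ⟨t, ht, hall⟩ := h
  fin_cases t
  · have e1 : u 1 = -1 := (hu 1).resolve_left fun h => absurd (hall 1 h) (by decide)
    have e2 : u 2 = -1 := (hu 2).resolve_left fun h => absurd (hall 2 h) (by decide)
    have ht' : u 0 = 1 := ht; linarith
  · have e1 : u 0 = -1 := (hu 0).resolve_left fun h => absurd (hall 0 h) (by decide)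
    have e2 : u 2 = -1 := (hu 2).resolve_left fun h => absurd (hall 2 h) (by decide)
    have ht' : u 1 = 1 := ht; linarith
  · have e1 : u 0 = -1 := (hu 0).resolve_left fun h => absurd (hall 0 h) (by decide)
    have e2 : u 1 = -1 := (hu 1).resolve_left fun h => absurd (hall 1 h) (by decide)
    have ht' : u 2 = 1 := ht; linarith

theorem pPhi_has_zero_iff_satisfiable {n k : ℕ}
    (v : Fin k → Fin 3 → Fin n) (b : Fin k → Fin 3 → Bool) :
    (∃ (x : Fin n → ℝ) (y z lam : ℝ), pPhi v b (x, y, z, lam) = 0) ↔ OneInThreeSat v b := by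
  constructor
  · rintro ⟨x, y, z, lam, h⟩
    have hs_nonneg : (0:ℝ) ≤ sPhi v b x := by
      apply add_nonneg <;> apply Finset.sum_nonneg <;> intro i _ <;> positivity
    have h2nn : (0:ℝ) ≤ (1 - lam) ^ 2 * (y ^ 2 + (y * z - 1) ^ 2) := by positivity
    have h1nn : (0:ℝ) ≤ lam ^ 2 * sPhi v b x := by positivity
    have hsplit := (add_eq_zero_iff_of_nonneg h1nn h2nn).1 h
    have hlam : lam = 1 := by
      by_contra hl
      have : y ^ 2 + (y * z - 1) ^ 2 = 0 := by
        have h1l : (1 - lam) ^ 2 ≠ 0 := by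
          intro hc; apply hl; nlinarith [sq_nonneg (1 - lam)]
        exact (mul_eq_zero.1 hsplit.2).resolve_left h1l
      have hy : y = 0 := by nlinarith [sq_nonneg y, sq_nonneg (y * z - 1)]
      rw [hy] at this; nlinarith
    have hsphi : sPhi v b x = 0 := by
      have := hsplit.1; rw [hlam] at this; linarith
    have hsum := (add_eq_zero_iff_of_nonneg
      (Finset.sum_nonneg fun i _ => sq_nonneg _)
      (Finset.sum_nonneg fun j _ => sq_nonneg _)).1 hsphi
    have hxj : ∀ j : Fin n, x j = 1 ∨ x j = -1 := by
      intro j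
      have := (Finset.sum_eq_zero_iff_of_nonneg (fun j _ => sq_nonneg _)).1 hsum.2 j
        (Finset.mem_univ j)
      have hx2 : x j ^ 2 = 1 := by nlinarith [sq_nonneg (1 - x j ^ 2)]
      have : (x j - 1) * (x j + 1) = 0 := by nlinarith
      rcases mul_eq_zero.1 this with h | h
      · left; linarith
      · right; linarith
    set a : Fin n → Bool := fun j => decide (x j = 1) with ha
    have hxa : ∀ j, x j = if a j then (1:ℝ) else -1 := by
      intro j
      rcases hxj j with h | h <;> simp [ha, h] <;> norm_num
    refine ⟨a, fun i => ?_⟩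
    have hclause := (Finset.sum_eq_zero_iff_of_nonneg (fun i _ => sq_nonneg _)).1 hsum.1 i
      (Finset.mem_univ i)
    have hc0 : Eps (b i 0) * x (v i 0) + Eps (b i 1) * x (v i 1) + Eps (b i 2) * x (v i 2) + 1 = 0 := by
      nlinarith [sq_nonneg (Eps (b i 0) * x (v i 0) + Eps (b i 1) * x (v i 1) + Eps (b i 2) * x (v i 2) + 1)]
    have := key1 (fun t => Eps (b i t) * x (v i t)) (fun t => by
      simp only [hxa (v i t)]; exact eps_mul_mem _ _) hc0
    refine (existsUnique_congr fun t => ?_).1 this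
    simp only [hxa (v i t)]; exact eps_mul_one_iff _ _
  · rintro ⟨a, ha⟩
    refine ⟨fun j => if a j then 1 else -1, 0, 0, 1, ?_⟩
    simp only [pPhi, sPhi]
    have h1 : ∀ j : Fin n, (1 - (if a j then (1:ℝ) else -1) ^ 2) ^ 2 = 0 := by
      intro j; by_cases h : a j <;> simp [h] <;> norm_num
    have h2 : ∀ i : Fin k,
        (Eps (b i 0) * (if a (v i 0) then (1:ℝ) else -1) +
         Eps (b i 1) * (if a (v i 1) then (1:ℝ) else -1) +
         Eps (b i 2) * (if a (v i 2) then (1:ℝ) else -1) + 1) ^ 2 = 0 := by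
      intro i
      have := key2 (fun t => Eps (b i t) * (if a (v i t) then (1:ℝ) else -1))
        (fun t => eps_mul_mem _ _)
        ((existsUnique_congr fun t => (eps_mul_one_iff (b i t) (a (v i t)))).2 (ha i))
      rw [this]; norm_num
    rw [Finset.sum_eq_zero (fun i _ => h2 i), Finset.sum_eq_zero (fun j _ => h1 j)]
    ring
end

section
/- For every ONE-IN-THREE 3SAT instance φ: if p_φ(x, y, z, λ) = 0 then p̂_φ(x, λ·x, y, z, y·z, λ) = 0, and conversely if p̂_φ(x, χ, y, z, w, λ) = 0 then p_φ(x, y, z, λ) = 0. In particular, p̂_φ has a zero if and only if p_φ has a zero, which holds if and only if φ is satisfiable. -/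
open Finset Filter

/-- The quartic polynomial `p̂_φ(x, χ, y, z, w, λ)` obtained from `p_φ` by substituting
`χ j` for each product `λ·(x j)` and `w` for `y·z`. -/
noncomputable def pHat {n k : ℕ} (v : Fin k → Fin 3 → Fin n) (b : Fin k → Fin 3 → Bool)
    (x χ : Fin n → ℝ) (y z w lam : ℝ) : ℝ :=
  (∑ i : Fin k,
    (Eps (b i 0) * χ (v i 0) + Eps (b i 1) * χ (v i 1) + Eps (b i 2) * χ (v i 2) + lam) ^ 2)
  + (∑ j : Fin n, (lam - χ j * x j) ^ 2)
  + (1 - lam) ^ 2 * (y ^ 2 + (w - 1) ^ 2) + (w - y * z) ^ 2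
  + ∑ j : Fin n, (χ j - lam * x j) ^ 2

lemma eu3 (c : Fin 3 → Prop) : (∃! t, c t) ↔
    (c 0 ∧ ¬ c 1 ∧ ¬ c 2) ∨ (¬ c 0 ∧ c 1 ∧ ¬ c 2) ∨ (¬ c 0 ∧ ¬ c 1 ∧ c 2) := by
  constructor
  · rintro ⟨t, ht, hu⟩
    fin_cases t
    · exact Or.inl ⟨ht, fun h => absurd (hu 1 h) (by decide), fun h => absurd (hu 2 h) (by decide)⟩
    · exact Or.inr (Or.inl ⟨fun h => absurd (hu 0 h) (by decide), ht,
        fun h => absurd (hu 2 h) (by decide)⟩)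
    · exact Or.inr (Or.inr ⟨fun h => absurd (hu 0 h) (by decide),
        fun h => absurd (hu 1 h) (by decide), ht⟩)
  · rintro (⟨h0, h1, h2⟩ | ⟨h0, h1, h2⟩ | ⟨h0, h1, h2⟩)
    · exact ⟨0, h0, fun t ht => by fin_cases t <;> tauto⟩
    · exact ⟨1, h1, fun t ht => by fin_cases t <;> tauto⟩
    · exact ⟨2, h2, fun t ht => by fin_cases t <;> tauto⟩

lemma pHat_eq {n k : ℕ} (v : Fin k → Fin 3 → Fin n) (b : Fin k → Fin 3 → Bool)
    (x : Fin n → ℝ) (y z lam : ℝ) :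
    pHat v b x (fun j => lam * x j) y z (y * z) lam = pPhi v b (x, y, z, lam) := by
  simp only [pHat, pPhi, sPhi]
  have h1 : ∑ i : Fin k, (Eps (b i 0) * (lam * x (v i 0)) + Eps (b i 1) * (lam * x (v i 1))
      + Eps (b i 2) * (lam * x (v i 2)) + lam) ^ 2
      = lam ^ 2 * ∑ i : Fin k, (Eps (b i 0) * x (v i 0) + Eps (b i 1) * x (v i 1)
      + Eps (b i 2) * x (v i 2) + 1) ^ 2 := by
    rw [Finset.mul_sum]; exact Finset.sum_congr rfl fun i _ => by ring
  have h2 : ∑ j : Fin n, (lam - lam * x j * x j) ^ 2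
      = lam ^ 2 * ∑ j : Fin n, (1 - x j ^ 2) ^ 2 := by
    rw [Finset.mul_sum]; exact Finset.sum_congr rfl fun j _ => by ring
  have h3 : ∑ j : Fin n, (lam * x j - lam * x j) ^ 2 = 0 := by simp
  rw [h1, h2, h3]; ring
theorem pHat_zero_iff_pPhi_zero_iff_satisfiable {n k : ℕ}
    (v : Fin k → Fin 3 → Fin n) (b : Fin k → Fin 3 → Bool) :
    (∀ (x : Fin n → ℝ) (y z lam : ℝ), pPhi v b (x, y, z, lam) = 0 →
      pHat v b x (fun j => lam * x j) y z (y * z) lam = 0) ∧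
    (∀ (x χ : Fin n → ℝ) (y z w lam : ℝ), pHat v b x χ y z w lam = 0 →
      pPhi v b (x, y, z, lam) = 0) ∧
    ((∃ (x χ : Fin n → ℝ) (y z w lam : ℝ), pHat v b x χ y z w lam = 0) ↔
      (∃ (x : Fin n → ℝ) (y z lam : ℝ), pPhi v b (x, y, z, lam) = 0)) ∧
    ((∃ (x : Fin n → ℝ) (y z lam : ℝ), pPhi v b (x, y, z, lam) = 0) ↔
      OneInThreeSat v b) := by
  classical
  have hfwd : ∀ (x : Fin n → ℝ) (y z lam : ℝ), pPhi v b (x, y, z, lam) = 0 →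
      pHat v b x (fun j => lam * x j) y z (y * z) lam = 0 := by
    intro x y z lam h
    rw [pHat_eq]; exact h
  have hback : ∀ (x χ : Fin n → ℝ) (y z w lam : ℝ), pHat v b x χ y z w lam = 0 →
      pPhi v b (x, y, z, lam) = 0 := by
    intro x χ y z w lam h
    simp only [pHat] at h
    have hA : (0:ℝ) ≤ ∑ i : Fin k, (Eps (b i 0) * χ (v i 0) + Eps (b i 1) * χ (v i 1)
        + Eps (b i 2) * χ (v i 2) + lam) ^ 2 := Finset.sum_nonneg fun i _ => sq_nonneg _
    have hB : (0:ℝ) ≤ ∑ j : Fin n, (lam - χ j * x j) ^ 2 :=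
      Finset.sum_nonneg fun j _ => sq_nonneg _
    have hC : (0:ℝ) ≤ (1 - lam) ^ 2 * (y ^ 2 + (w - 1) ^ 2) :=
      mul_nonneg (sq_nonneg _) (by positivity)
    have hD : (0:ℝ) ≤ (w - y * z) ^ 2 := sq_nonneg _
    have hE : (0:ℝ) ≤ ∑ j : Fin n, (χ j - lam * x j) ^ 2 :=
      Finset.sum_nonneg fun j _ => sq_nonneg _
    have hD0 : (w - y * z) ^ 2 = 0 := by linarith
    have hE0 : ∑ j : Fin n, (χ j - lam * x j) ^ 2 = 0 := by linarith
    have hw : w = y * z := by nlinarith [sq_nonneg (w - y * z)]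
    have hχ : χ = fun j => lam * x j := by
      funext j
      have := (Finset.sum_eq_zero_iff_of_nonneg (fun j _ => sq_nonneg _)).mp hE0 j (Finset.mem_univ j)
      have h2 : χ j - lam * x j = 0 := by nlinarith
      linarith
    subst hw hχ
    rw [← pHat_eq v b x y z lam]
    simpa only [pHat] using h
  refine ⟨hfwd, hback, ?_, ?_⟩
  · constructor
    · rintro ⟨x, χ, y, z, w, lam, h⟩
      exact ⟨x, y, z, lam, hback x χ y z w lam h⟩
    · rintro ⟨x, y, z, lam, h⟩
      exact ⟨x, _, y, z, _, lam, hfwd x y z lam h⟩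
  · constructor
    · rintro ⟨x, y, z, lam, h⟩
      simp only [pPhi] at h
      have hs : 0 ≤ sPhi v b x := by
        simp only [sPhi]
        have := Finset.sum_nonneg (s := (Finset.univ : Finset (Fin k)))
          (f := fun i => (Eps (b i 0) * x (v i 0) + Eps (b i 1) * x (v i 1)
            + Eps (b i 2) * x (v i 2) + 1) ^ 2) (fun i _ => sq_nonneg _)
        have h2 := Finset.sum_nonneg (s := (Finset.univ : Finset (Fin n)))
          (f := fun j => (1 - x j ^ 2) ^ 2) (fun j _ => sq_nonneg _)
        linarith
      have hyz : (0:ℝ) < y ^ 2 + (y * z - 1) ^ 2 := by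
        rcases eq_or_ne y 0 with hy | hy
        · simp [hy]
        · have : 0 < y ^ 2 := by positivity
          nlinarith [sq_nonneg (y * z - 1)]
      have hlam : lam = 1 := by
        have hp : (1 - lam) ^ 2 * (y ^ 2 + (y * z - 1) ^ 2) = 0 := by
          nlinarith [mul_nonneg (sq_nonneg lam) hs, sq_nonneg (1 - lam)]
        have h2 : (1 - lam) ^ 2 = 0 := (mul_eq_zero.mp hp).resolve_right (ne_of_gt hyz)
        have := pow_eq_zero_iff (n := 2) (by norm_num) |>.mp h2
        linarith
      subst hlam
      have hs0 : sPhi v b x = 0 := by nlinarith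
      simp only [sPhi] at hs0
      have hA : (0:ℝ) ≤ ∑ i : Fin k, (Eps (b i 0) * x (v i 0) + Eps (b i 1) * x (v i 1)
          + Eps (b i 2) * x (v i 2) + 1) ^ 2 := Finset.sum_nonneg fun i _ => sq_nonneg _
      have hB : (0:ℝ) ≤ ∑ j : Fin n, (1 - x j ^ 2) ^ 2 :=
        Finset.sum_nonneg fun j _ => sq_nonneg _
      have hA0 : ∀ i : Fin k, Eps (b i 0) * x (v i 0) + Eps (b i 1) * x (v i 1)
          + Eps (b i 2) * x (v i 2) + 1 = 0 := by
        intro i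
        have h1 : ∑ i : Fin k, (Eps (b i 0) * x (v i 0) + Eps (b i 1) * x (v i 1)
            + Eps (b i 2) * x (v i 2) + 1) ^ 2 = 0 := by linarith
        have := (Finset.sum_eq_zero_iff_of_nonneg (fun i _ => sq_nonneg _)).mp h1 i
          (Finset.mem_univ i)
        nlinarith
      have hB0 : ∀ j : Fin n, x j = 1 ∨ x j = -1 := by
        intro j
        have h1 : ∑ j : Fin n, (1 - x j ^ 2) ^ 2 = 0 := by linarith
        have := (Finset.sum_eq_zero_iff_of_nonneg (fun j _ => sq_nonneg _)).mp h1 j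
          (Finset.mem_univ j)
        have h2 : (x j - 1) * (x j + 1) = 0 := by nlinarith
        rcases mul_eq_zero.mp h2 with h | h
        · left; linarith
        · right; linarith
      set a : Fin n → Bool := fun j => if x j = 1 then true else false with ha
      have hx : ∀ j : Fin n, x j = if a j then 1 else -1 := by
        intro j
        rcases hB0 j with h | h <;> norm_num [ha, h]
      have hval : ∀ (j : Fin n) (c : Bool),
          Eps c * x j = if a j = c then 1 else -1 := by
        intro j c
        rw [hx j]
        cases h : a j <;> cases c <;> simp [Eps]
      refine ⟨a, fun i => (eu3 _).mpr ?_⟩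
      have hterm := hA0 i
      rw [hval, hval, hval] at hterm
      by_cases h0 : a (v i 0) = b i 0 <;> by_cases h1 : a (v i 1) = b i 1 <;>
        by_cases h2 : a (v i 2) = b i 2 <;>
        simp [h0, h1, h2] at hterm ⊢ <;> norm_num at hterm
    · rintro ⟨a, ha⟩
      refine ⟨fun j => if a j then 1 else -1, 0, 0, 1, ?_⟩
      simp only [pPhi, sPhi]
      have hterm : ∀ i : Fin k, (Eps (b i 0) * (if a (v i 0) then (1:ℝ) else -1)
          + Eps (b i 1) * (if a (v i 1) then (1:ℝ) else -1)
          + Eps (b i 2) * (if a (v i 2) then (1:ℝ) else -1) + 1) = 0 := by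
        intro i
        have hval : ∀ (j : Fin n) (c : Bool),
            Eps c * (if a j then (1:ℝ) else -1) = if a j = c then 1 else -1 := by
          intro j c; cases h : a j <;> cases c <;> simp [Eps]
        rw [hval, hval, hval]
        rcases (eu3 (fun t => a (v i t) = b i t)).mp (ha i) with ⟨g0, g1, g2⟩ | ⟨g0, g1, g2⟩ |
          ⟨g0, g1, g2⟩ <;> simp [g0, g1, g2] <;> norm_num
      have h1 : ∑ i : Fin k, (Eps (b i 0) * (if a (v i 0) then (1:ℝ) else -1)
          + Eps (b i 1) * (if a (v i 1) then (1:ℝ) else -1)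
          + Eps (b i 2) * (if a (v i 2) then (1:ℝ) else -1) + 1) ^ 2 = 0 := by
        apply Finset.sum_eq_zero; intro i _; rw [hterm i]; ring
      have h2 : ∑ j : Fin n, (1 - (if a j then (1:ℝ) else -1) ^ 2) ^ 2 = 0 := by
        apply Finset.sum_eq_zero; intro j _; cases h : a j <;> simp
      rw [h1, h2]; ring
end

section
/- For every ONE-IN-THREE 3SAT instance φ, the function p̂_φ is nonnegative and 0 is the greatest lower bound of its range (IsGLB (Set.range p̂_φ) 0), regardless of whether φ is satisfiable. -/
open Finset Filter

/-- `p̂_φ` viewed as a function on the product space. -/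
noncomputable def pHatFun {n k : ℕ} (v : Fin k → Fin 3 → Fin n) (b : Fin k → Fin 3 → Bool) :
    (Fin n → ℝ) × (Fin n → ℝ) × ℝ × ℝ × ℝ × ℝ → ℝ := fun q =>
  pHat v b q.1 q.2.1 q.2.2.1 q.2.2.2.1 q.2.2.2.2.1 q.2.2.2.2.2

theorem pHat_nonneg_and_isGLB_zero {n k : ℕ}
    (v : Fin k → Fin 3 → Fin n) (b : Fin k → Fin 3 → Bool) :
    (∀ q : (Fin n → ℝ) × (Fin n → ℝ) × ℝ × ℝ × ℝ × ℝ, 0 ≤ pHatFun v b q) ∧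
    IsGLB (Set.range (pHatFun v b)) 0 := by
  have hnn : ∀ q : (Fin n → ℝ) × (Fin n → ℝ) × ℝ × ℝ × ℝ × ℝ, 0 ≤ pHatFun v b q := by
    intro q
    unfold pHatFun pHat
    have h1 : (0:ℝ) ≤ ∑ i : Fin k,
        (Eps (b i 0) * q.2.1 (v i 0) + Eps (b i 1) * q.2.1 (v i 1) + Eps (b i 2) * q.2.1 (v i 2)
          + q.2.2.2.2.2) ^ 2 := Finset.sum_nonneg fun i _ => sq_nonneg _
    have h2 : (0:ℝ) ≤ ∑ j : Fin n, (q.2.2.2.2.2 - q.2.1 j * q.1 j) ^ 2 :=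
      Finset.sum_nonneg fun j _ => sq_nonneg _
    have h5 : (0:ℝ) ≤ ∑ j : Fin n, (q.2.1 j - q.2.2.2.2.2 * q.1 j) ^ 2 :=
      Finset.sum_nonneg fun j _ => sq_nonneg _
    have h3 : (0:ℝ) ≤ (1 - q.2.2.2.2.2) ^ 2 * (q.2.2.1 ^ 2 + (q.2.2.2.2.1 - 1) ^ 2) :=
      mul_nonneg (sq_nonneg _) (add_nonneg (sq_nonneg _) (sq_nonneg _))
    have h4 : (0:ℝ) ≤ (q.2.2.2.2.1 - q.2.2.1 * q.2.2.2.1) ^ 2 := sq_nonneg _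
    linarith
  refine ⟨hnn, ⟨?_, ?_⟩⟩
  · rintro r ⟨q, rfl⟩
    exact hnn q
  · intro c hc
    have key : ∀ t : ℝ, t ≠ 0 → c ≤ t ^ 2 := by
      intro t ht
      have : pHatFun v b (0, 0, t, 1/t, 1, 0) = t ^ 2 := by
        unfold pHatFun pHat
        simp [ht]
      have hmem : pHatFun v b (0, 0, t, 1/t, 1, 0) ∈ Set.range (pHatFun v b) :=
        Set.mem_range_self _
      calc c ≤ pHatFun v b (0, 0, t, 1/t, 1, 0) := hc hmem
        _ = t ^ 2 := this
    by_contra h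
    push_neg at h
    have hc2 : (0:ℝ) < c := h
    have ht : Real.sqrt (c/2) ≠ 0 := by positivity
    have := key _ ht
    rw [sq, Real.mul_self_sqrt (by positivity)] at this
    linarith
end

section
/- For every ONE-IN-THREE 3SAT instance φ, the feasible set F_φ is nonempty, 0 is the greatest lower bound of the set of objective values {γ ∈ ℝ : there exist x, χ, λ, y, z, w, ζ, ψ with (x, χ, λ, y, z, w, γ, ζ, ψ) ∈ F_φ}, and there exists a point of F_φ with γ = 0 if and only if φ is satisfiable. -/
open Finset Filter

/-- The feasibility conditions of the POP in the proof of Theorem 2.4. -/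
noncomputable def FeasPred {n k : ℕ} (v : Fin k → Fin 3 → Fin n) (b : Fin k → Fin 3 → Bool)
    (x : Fin n → ℝ) (χ : Fin k → ℝ) (lam y z w γ ζ ψ : ℝ) : Prop :=
  γ ≥ lam * (∑ i : Fin k, χ i) + (1 - lam) * (ψ + ζ) ∧
  (∀ j : Fin n, 1 - x j ^ 2 = 0) ∧
  (∀ i : Fin k, χ i =
    (Eps (b i 0) * x (v i 0) + Eps (b i 1) * x (v i 1) + Eps (b i 2) * x (v i 2) + 1) ^ 2) ∧
  ψ = y ^ 2 ∧ y * z = w ∧ ζ = (w - 1) ^ 2 ∧ lam * (1 - lam) = 0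

/-- The feasible set `F_φ` of the POP, as a set of tuples `(x, χ, λ, y, z, w, γ, ζ, ψ)`. -/
noncomputable def FeasSet {n k : ℕ} (v : Fin k → Fin 3 → Fin n) (b : Fin k → Fin 3 → Bool) :
    Set ((Fin n → ℝ) × (Fin k → ℝ) × ℝ × ℝ × ℝ × ℝ × ℝ × ℝ × ℝ) :=
  {q | FeasPred v b q.1 q.2.1 q.2.2.1 q.2.2.2.1 q.2.2.2.2.1 q.2.2.2.2.2.1
        q.2.2.2.2.2.2.1 q.2.2.2.2.2.2.2.1 q.2.2.2.2.2.2.2.2}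

theorem feasSet_nonempty_glb_and_attained_iff_satisfiable {n k : ℕ}
    (v : Fin k → Fin 3 → Fin n) (b : Fin k → Fin 3 → Bool) :
    (FeasSet v b).Nonempty ∧
    IsGLB {γ : ℝ | ∃ (x : Fin n → ℝ) (χ : Fin k → ℝ) (lam y z w ζ ψ : ℝ),
        (x, χ, lam, y, z, w, γ, ζ, ψ) ∈ FeasSet v b} 0 ∧
    ((∃ (x : Fin n → ℝ) (χ : Fin k → ℝ) (lam y z w ζ ψ : ℝ),
        (x, χ, lam, y, z, w, (0 : ℝ), ζ, ψ) ∈ FeasSet v b) ↔ OneInThreeSat v b) := by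
  classical
  have eps_mul : ∀ c a : Bool, Eps c * Eps a = if a = c then 1 else -1 := by
    intro c a; cases a <;> cases c <;> simp [Eps]
  have eps_sq : ∀ c : Bool, Eps c ^ 2 = 1 := by
    intro c; cases c <;> simp [Eps]
  -- satisfiable implies γ = 0 attained
  have hsat_imp : OneInThreeSat v b →
      (∃ (x : Fin n → ℝ) (χ : Fin k → ℝ) (lam y z w ζ ψ : ℝ),
        (x, χ, lam, y, z, w, (0 : ℝ), ζ, ψ) ∈ FeasSet v b) := by
    rintro ⟨a, ha⟩
    refine ⟨fun j => Eps (a j),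
      fun i => (Eps (b i 0) * Eps (a (v i 0)) + Eps (b i 1) * Eps (a (v i 1)) +
        Eps (b i 2) * Eps (a (v i 2)) + 1) ^ 2, 1, 0, 0, 0, 1, 0, ?_⟩
    have hχ : ∀ i : Fin k, (Eps (b i 0) * Eps (a (v i 0)) + Eps (b i 1) * Eps (a (v i 1)) +
        Eps (b i 2) * Eps (a (v i 2)) + 1) ^ 2 = 0 := by
      intro i
      obtain ⟨t, ht, hu⟩ := ha i
      rw [eps_mul, eps_mul, eps_mul]
      fin_cases t
      · have h1 : ¬ (a (v i 1) = b i 1) := fun h => by simpa using hu 1 h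
        have h2 : ¬ (a (v i 2) = b i 2) := fun h => by simpa using hu 2 h
        simp only [Fin.isValue] at ht
        rw [if_pos (show a (v i 0) = b i 0 from ht), if_neg h1, if_neg h2]; ring
      · have h1 : ¬ (a (v i 0) = b i 0) := fun h => by simpa using hu 0 h
        have h2 : ¬ (a (v i 2) = b i 2) := fun h => by simpa using hu 2 h
        simp only [Fin.isValue] at ht
        rw [if_neg h1, if_pos (show a (v i 1) = b i 1 from ht), if_neg h2]; ring
      · have h1 : ¬ (a (v i 0) = b i 0) := fun h => by simpa using hu 0 h
        have h2 : ¬ (a (v i 1) = b i 1) := fun h => by simpa using hu 1 h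
        simp only [Fin.isValue] at ht
        rw [if_neg h1, if_neg h2, if_pos (show a (v i 2) = b i 2 from ht)]; ring
    refine ⟨?_, fun j => by rw [eps_sq]; ring, fun i => rfl, by norm_num, by norm_num,
      by norm_num, by norm_num⟩
    have : (∑ i : Fin k, (Eps (b i 0) * Eps (a (v i 0)) + Eps (b i 1) * Eps (a (v i 1)) +
        Eps (b i 2) * Eps (a (v i 2)) + 1) ^ 2) = 0 :=
      Finset.sum_eq_zero fun i _ => hχ i
    rw [this]; norm_num
  -- γ = 0 attained implies satisfiable
  have himp_sat : (∃ (x : Fin n → ℝ) (χ : Fin k → ℝ) (lam y z w ζ ψ : ℝ),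
      (x, χ, lam, y, z, w, (0 : ℝ), ζ, ψ) ∈ FeasSet v b) → OneInThreeSat v b := by
    rintro ⟨x, χ, lam, y, z, w, ζ, ψ, h⟩
    simp only [FeasSet, FeasPred, Set.mem_setOf_eq] at h
    obtain ⟨h1, h2, h3, h4, h5, h6, h7⟩ := h
    rcases mul_eq_zero.mp h7 with hl | hl
    · exfalso
      subst hl
      simp only [zero_mul, sub_zero, one_mul, zero_add] at h1
      have hy : y = 0 := by nlinarith [sq_nonneg (w - 1), sq_nonneg y]
      subst hy
      have hw : w = 0 := by rw [← h5]; ring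
      subst hw
      nlinarith
    · have hlam : lam = 1 := by linarith
      subst hlam
      simp only [sub_self, zero_mul, one_mul, add_zero] at h1
      have hχnn : ∀ i ∈ Finset.univ, (0:ℝ) ≤ χ i := fun i _ => by rw [h3 i]; positivity
      have hχ0 : ∀ i : Fin k, χ i = 0 := by
        intro i
        have := (Finset.sum_eq_zero_iff_of_nonneg hχnn).mp
          (le_antisymm h1 (Finset.sum_nonneg hχnn)) i (Finset.mem_univ i)
        exact this
      set a : Fin n → Bool := fun j => decide (x j = 1) with ha
      have hx : ∀ j, x j = Eps (a j) := by
        intro j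
        have hj := h2 j
        have : (x j - 1) * (x j + 1) = 0 := by nlinarith
        rcases mul_eq_zero.mp this with h | h
        · have h1' : x j = 1 := by linarith
          simp [ha, h1', Eps]
        · have h1' : x j = -1 := by linarith
          have hne : ¬ (x j = 1) := by rw [h1']; norm_num
          rw [show a j = false by simp [ha, hne], h1']; simp [Eps]
      refine ⟨a, fun i => ?_⟩
      have hE : (if a (v i 0) = b i 0 then (1:ℝ) else -1) +
          (if a (v i 1) = b i 1 then (1:ℝ) else -1) +
          (if a (v i 2) = b i 2 then (1:ℝ) else -1) + 1 = 0 := by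
        have := h3 i
        rw [hχ0 i, hx (v i 0), hx (v i 1), hx (v i 2), eps_mul, eps_mul, eps_mul] at this
        have := (pow_eq_zero_iff (by norm_num)).mp this.symm
        -- reorder: need to match Bool equality direction
        exact this
      by_cases p0 : a (v i 0) = b i 0 <;> by_cases p1 : a (v i 1) = b i 1 <;>
        by_cases p2 : a (v i 2) = b i 2
      · rw [if_pos p0, if_pos p1, if_pos p2] at hE; norm_num at hE
      · rw [if_pos p0, if_pos p1, if_neg p2] at hE; norm_num at hE
      · rw [if_pos p0, if_neg p1, if_pos p2] at hE; norm_num at hE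
      · refine ⟨0, p0, fun t ht => ?_⟩
        fin_cases t
        · rfl
        · exact absurd ht p1
        · exact absurd ht p2
      · rw [if_neg p0, if_pos p1, if_pos p2] at hE; norm_num at hE
      · refine ⟨1, p1, fun t ht => ?_⟩
        fin_cases t
        · exact absurd ht p0
        · rfl
        · exact absurd ht p2
      · refine ⟨2, p2, fun t ht => ?_⟩
        fin_cases t
        · exact absurd ht p0
        · exact absurd ht p1
        · rfl
      · rw [if_neg p0, if_neg p1, if_neg p2] at hE; norm_num at hE
  refine ⟨?_, ⟨?_, ?_⟩, himp_sat, hsat_imp⟩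
  · -- nonempty
    refine ⟨(fun _ => 1, fun i => (Eps (b i 0) * 1 + Eps (b i 1) * 1 + Eps (b i 2) * 1 + 1) ^ 2,
      0, 0, 0, 0, 1, 1, 0), ?_, fun j => by norm_num, fun i => rfl, by norm_num, by norm_num,
      by norm_num, by norm_num⟩
    norm_num
  · -- lower bound
    rintro γ ⟨x, χ, lam, y, z, w, ζ, ψ, h⟩
    simp only [FeasSet, FeasPred, Set.mem_setOf_eq] at h
    obtain ⟨h1, h2, h3, h4, h5, h6, h7⟩ := h
    have hχnn : (0:ℝ) ≤ ∑ i : Fin k, χ i :=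
      Finset.sum_nonneg fun i _ => by rw [h3 i]; positivity
    rcases mul_eq_zero.mp h7 with hl | hl
    · subst hl
      simp only [zero_mul, sub_zero, one_mul, zero_add] at h1
      nlinarith [sq_nonneg y, sq_nonneg (w - 1)]
    · have hlam : lam = 1 := by linarith
      subst hlam
      simp only [sub_self, zero_mul, one_mul, add_zero] at h1
      linarith
  · -- greatest lower bound
    intro l hl
    by_contra hc
    push_neg at hc
    set ε := l / 2 with hε
    have hεpos : 0 < ε := by positivity
    have hεlt : ε < l := by linarith
    have hmem : ε ∈ {γ : ℝ | ∃ (x : Fin n → ℝ) (χ : Fin k → ℝ) (lam y z w ζ ψ : ℝ),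
        (x, χ, lam, y, z, w, γ, ζ, ψ) ∈ FeasSet v b} := by
      refine ⟨fun _ => 1,
        fun i => (Eps (b i 0) * 1 + Eps (b i 1) * 1 + Eps (b i 2) * 1 + 1) ^ 2,
        0, Real.sqrt ε, (Real.sqrt ε)⁻¹, 1, 0, ε, ?_, fun j => by norm_num, fun i => rfl,
        ?_, ?_, by norm_num, by norm_num⟩
      · norm_num
      · rw [Real.sq_sqrt hεpos.le]
      · exact mul_inv_cancel₀ (Real.sqrt_ne_zero'.mpr hεpos)
    exact absurd (hl hmem) (not_le.mpr hεlt)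
end

section
/- For every ONE-IN-THREE 3SAT instance φ, the homogenized quartic s_{φh} is positive definite (i.e., s_{φh}(x₀, x) > 0 for all (x₀, x) ≠ (0, 0)) if and only if φ is not satisfiable. -/
open Finset Filter

/-- The homogenized quartic `s_{φh}(x₀, x)`. -/
noncomputable def sPhiH {n k : ℕ} (v : Fin k → Fin 3 → Fin n) (b : Fin k → Fin 3 → Bool)
    (x₀ : ℝ) (x : Fin n → ℝ) : ℝ :=
  (∑ i : Fin k,
    x₀ ^ 2 * (Eps (b i 0) * x (v i 0) + Eps (b i 1) * x (v i 1)
      + Eps (b i 2) * x (v i 2) + x₀) ^ 2)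
  + ∑ j : Fin n, (x₀ ^ 2 - x j ^ 2) ^ 2

lemma eps_sq (c : Bool) : Eps c ^ 2 = 1 := by cases c <;> norm_num [Eps]

lemma eps_mul (c d : Bool) : Eps c * Eps d = if c = d then 1 else -1 := by
  cases c <;> cases d <;> norm_num [Eps]

theorem sPhiH_positive_definite_iff_not_satisfiable {n k : ℕ}
    (v : Fin k → Fin 3 → Fin n) (b : Fin k → Fin 3 → Bool) :
    (∀ q : ℝ × (Fin n → ℝ), q ≠ 0 → 0 < sPhiH v b q.1 q.2) ↔ ¬ OneInThreeSat v b := by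
  constructor
  · rintro hpos ⟨a, ha⟩
    have hne : ((1 : ℝ), fun j => Eps (a j)) ≠ (0 : ℝ × (Fin n → ℝ)) := by
      intro h
      exact one_ne_zero (congrArg Prod.fst h)
    have h := hpos ((1 : ℝ), fun j => Eps (a j)) hne
    have hz : sPhiH v b 1 (fun j => Eps (a j)) = 0 := by
      unfold sPhiH
      have h2 : ∑ j : Fin n, ((1:ℝ) ^ 2 - (Eps (a j)) ^ 2) ^ 2 = 0 := by
        apply Finset.sum_eq_zero; intro j _; rw [eps_sq]; ring
      rw [h2, add_zero]
      apply Finset.sum_eq_zero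
      intro i _
      obtain ⟨t, ht, hu⟩ := ha i
      have hiff : ∀ s, Eps (b i s) * Eps (a (v i s)) = if s = t then 1 else -1 := by
        intro s
        rw [eps_mul]
        by_cases hst : s = t
        · subst hst; simp [ht.symm]
        · have : b i s ≠ a (v i s) := fun hc => hst (hu s hc.symm)
          simp [hst, this]
      have fin3 : ∀ t : Fin 3, t = 0 ∨ t = 1 ∨ t = 2 := by decide
      rcases fin3 t with rfl | rfl | rfl <;>
        norm_num [hiff 0, hiff 1, hiff 2,
          show ((0:Fin 3) = 1) = False from by decide, show ((0:Fin 3) = 2) = False from by decide,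
          show ((1:Fin 3) = 0) = False from by decide, show ((1:Fin 3) = 2) = False from by decide,
          show ((2:Fin 3) = 0) = False from by decide, show ((2:Fin 3) = 1) = False from by decide]
    exact absurd hz (ne_of_gt h)
  · intro hns q hq
    have s1 : (0:ℝ) ≤ ∑ i : Fin k,
        q.1 ^ 2 * (Eps (b i 0) * q.2 (v i 0) + Eps (b i 1) * q.2 (v i 1)
          + Eps (b i 2) * q.2 (v i 2) + q.1) ^ 2 :=
      Finset.sum_nonneg (fun i _ => mul_nonneg (sq_nonneg _) (sq_nonneg _))
    have s2 : (0:ℝ) ≤ ∑ j : Fin n, (q.1 ^ 2 - q.2 j ^ 2) ^ 2 :=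
      Finset.sum_nonneg (fun j _ => sq_nonneg _)
    have hnn : 0 ≤ sPhiH v b q.1 q.2 := by unfold sPhiH; linarith
    rcases hnn.lt_or_eq with h | h
    · exact h
    exfalso
    have h0 : sPhiH v b q.1 q.2 = 0 := h.symm
    unfold sPhiH at h0
    have hA : ∀ i : Fin k, q.1 ^ 2 * (Eps (b i 0) * q.2 (v i 0) + Eps (b i 1) * q.2 (v i 1)
          + Eps (b i 2) * q.2 (v i 2) + q.1) ^ 2 = 0 := by
      have hs : ∑ i : Fin k, q.1 ^ 2 * (Eps (b i 0) * q.2 (v i 0) + Eps (b i 1) * q.2 (v i 1)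
          + Eps (b i 2) * q.2 (v i 2) + q.1) ^ 2 = 0 := by linarith
      intro i
      exact (Finset.sum_eq_zero_iff_of_nonneg
        (fun i _ => mul_nonneg (sq_nonneg _) (sq_nonneg _))).mp hs i (Finset.mem_univ i)
    have hB : ∀ j : Fin n, (q.1 ^ 2 - q.2 j ^ 2) ^ 2 = 0 := by
      have hs : ∑ j : Fin n, (q.1 ^ 2 - q.2 j ^ 2) ^ 2 = 0 := by linarith
      intro j
      exact (Finset.sum_eq_zero_iff_of_nonneg (fun j _ => sq_nonneg _)).mp hs j
        (Finset.mem_univ j)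
    by_cases hx0 : q.1 = 0
    · apply hq
      have hx : ∀ j, q.2 j = 0 := by
        intro j
        have := hB j
        rw [hx0] at this
        have h4 : (q.2 j ^ 2) ^ 2 = 0 := by linear_combination this
        have h2 : q.2 j ^ 2 = 0 := by
          exact pow_eq_zero_iff two_ne_zero |>.mp h4
        exact pow_eq_zero_iff two_ne_zero |>.mp h2
      exact Prod.ext hx0 (funext hx)
    · apply hns
      refine ⟨fun j => decide (q.2 j = q.1), fun i => ?_⟩
      have hx : ∀ j, q.2 j = q.1 ∨ q.2 j = -q.1 := by
        intro j
        have hb := hB j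
        have : (q.2 j - q.1) * (q.2 j + q.1) = 0 := by nlinarith
        rcases mul_eq_zero.mp this with h | h
        · left; linarith
        · right; linarith
      have hne2 : ¬ (-q.1 = q.1) := fun hc => hx0 (by linarith)
      have he : ∀ s : Fin 3, Eps (b i s) * q.2 (v i s)
          = if (decide (q.2 (v i s) = q.1) = b i s) then q.1 else -q.1 := by
        intro s
        rcases hx (v i s) with h | h <;> cases hbs : b i s <;>
          simp [Eps, h, hbs, hne2]
      have hclause : Eps (b i 0) * q.2 (v i 0) + Eps (b i 1) * q.2 (v i 1)
          + Eps (b i 2) * q.2 (v i 2) + q.1 = 0 := by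
        have := hA i
        have h2 : q.1 ^ 2 ≠ 0 := pow_ne_zero _ hx0
        have := (mul_eq_zero.mp this).resolve_left h2
        exact pow_eq_zero_iff (n := 2) (by norm_num) |>.mp this
      rw [he 0, he 1, he 2] at hclause
      have fin3 : ∀ t : Fin 3, t = 0 ∨ t = 1 ∨ t = 2 := by decide
      by_cases h0' : decide (q.2 (v i 0) = q.1) = b i 0 <;>
      by_cases h1' : decide (q.2 (v i 1) = q.1) = b i 1 <;>
      by_cases h2' : decide (q.2 (v i 2) = q.1) = b i 2
      · rw [if_pos h0', if_pos h1', if_pos h2'] at hclause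
        exact absurd (by linarith : q.1 = 0) hx0
      · rw [if_pos h0', if_pos h1', if_neg h2'] at hclause
        exact absurd (by linarith : q.1 = 0) hx0
      · rw [if_pos h0', if_neg h1', if_pos h2'] at hclause
        exact absurd (by linarith : q.1 = 0) hx0
      · exact ⟨0, h0', fun t ht => by
          rcases fin3 t with rfl | rfl | rfl
          exacts [rfl, absurd ht h1', absurd ht h2']⟩
      · rw [if_neg h0', if_pos h1', if_pos h2'] at hclause
        exact absurd (by linarith : q.1 = 0) hx0
      · exact ⟨1, h1', fun t ht => by
          rcases fin3 t with rfl | rfl | rfl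
          exacts [absurd ht h0', rfl, absurd ht h2']⟩
      · exact ⟨2, h2', fun t ht => by
          rcases fin3 t with rfl | rfl | rfl
          exacts [absurd ht h0', absurd ht h1', rfl]⟩
      · rw [if_neg h0', if_neg h1', if_neg h2'] at hclause
        exact absurd (by linarith : q.1 = 0) hx0
end

section
/- For every ONE-IN-THREE 3SAT instance φ, the homogenized quartic s_{φh} is coercive (as a function on ℝ^{1+n}) if and only if φ is not satisfiable. -/
open Finset Filter

/-!
`s_{φh}` is a continuous nonnegative form of degree 4. Such a form is coercive iff it has no
zero on the unit sphere: a positive minimum `m` there gives `s ≥ m ‖q‖⁴`, while a nontrivial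
zero spreads along a whole ray. A nontrivial zero of `s_{φh}` forces `x₀ ≠ 0` and `x j = ± x₀`;
rescaling to `x₀ = 1`, the clause terms vanish iff the signs form a one-in-three assignment,
because a sum of three `±1`'s equals `-1` iff exactly one of them is `+1`.
-/

section Homogeneous

variable {E : Type*} [NormedAddCommGroup E] [NormedSpace ℝ E] {f : E → ℝ} {d : ℕ}

theorem tendsto_cobounded_atTop_of_homogeneous [ProperSpace E] (hd : d ≠ 0) (hf : Continuous f)
    (hhom : ∀ c : ℝ, 0 < c → ∀ x, f (c • x) = c ^ d * f x) (hpos : ∀ x ≠ 0, 0 < f x) :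
    Tendsto f (Bornology.cobounded E) atTop := by
  obtain ⟨m, hm, hmf⟩ := (isCompact_sphere (0 : E) 1).exists_forall_le' hf.continuousOn
    fun x hx => hpos x (ne_zero_of_mem_unit_sphere ⟨x, hx⟩)
  have hlb : ∀ x ≠ 0, m * ‖x‖ ^ d ≤ f x := by
    intro x hx
    have hnx : 0 < ‖x‖ := norm_pos_iff.mpr hx
    have hunit : ‖x‖⁻¹ • x ∈ Metric.sphere (0 : E) 1 := by
      simp [norm_smul, hnx.ne']
    calc m * ‖x‖ ^ d ≤ f (‖x‖⁻¹ • x) * ‖x‖ ^ d := by gcongr; exact hmf _ hunit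
      _ = f x := by
        rw [mul_comm, ← hhom _ hnx, smul_smul, mul_inv_cancel₀ hnx.ne', one_smul]
  refine tendsto_atTop_mono' _ ?_
    (((tendsto_pow_atTop hd).const_mul_atTop hm).comp tendsto_norm_cobounded_atTop)
  filter_upwards [Bornology.eventually_ne_cobounded 0] with x hx using hlb x hx

theorem not_tendsto_cobounded_atTop_of_homogeneous {x : E} (hx : x ≠ 0)
    (hhom : ∀ c : ℝ, 0 < c → ∀ x, f (c • x) = c ^ d * f x) (hfx : f x = 0) :
    ¬ Tendsto f (Bornology.cobounded E) atTop := by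
  intro hco
  have hray : Tendsto (fun t : ℝ => t • x) atTop (Bornology.cobounded E) := by
    rw [← tendsto_norm_atTop_iff_cobounded]
    simp only [norm_smul, Real.norm_eq_abs]
    exact tendsto_abs_atTop_atTop.atTop_mul_const (norm_pos_iff.mpr hx)
  obtain ⟨t, hft, ht⟩ :=
    ((hco.comp hray).eventually_gt_atTop 0 |>.and (eventually_gt_atTop 0)).exists
  simp [Function.comp, hhom t ht, hfx] at hft

theorem tendsto_cobounded_atTop_iff_of_homogeneous [ProperSpace E] (hd : d ≠ 0)
    (hf : Continuous f) (hf0 : 0 ≤ f)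
    (hhom : ∀ c : ℝ, 0 < c → ∀ x, f (c • x) = c ^ d * f x) :
    Tendsto f (Bornology.cobounded E) atTop ↔ ¬ ∃ x ≠ 0, f x = 0 := by
  refine ⟨fun hco ⟨x, hx, hfx⟩ => not_tendsto_cobounded_atTop_of_homogeneous hx hhom hfx hco,
    fun hzero => tendsto_cobounded_atTop_of_homogeneous hd hf hhom fun x hx => ?_⟩
  exact (hf0 x).lt_of_ne fun h => hzero ⟨x, hx, h.symm⟩

end Homogeneous

theorem eps_mul_eps (a b : Bool) : Eps a * Eps b = Eps (a == b) := by
  cases a <;> cases b <;> norm_num [Eps]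

theorem eps_add_eps_add_eps_add_one_eq_zero_iff (s : Fin 3 → Bool) :
    Eps (s 0) + Eps (s 1) + Eps (s 2) + 1 = 0 ↔ ∃! t, s t = true := by
  simp only [ExistsUnique, Fin.exists_fin_succ, Fin.forall_fin_succ]
  cases h0 : s 0 <;> cases h1 : s 1 <;> cases h2 : s 2 <;> norm_num [Eps, h0, h1, h2] <;> decide

section Instance

variable {n k : ℕ} (v : Fin k → Fin 3 → Fin n) (b : Fin k → Fin 3 → Bool)

noncomputable def clauseForm (i : Fin k) (x₀ : ℝ) (x : Fin n → ℝ) : ℝ :=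
  Eps (b i 0) * x (v i 0) + Eps (b i 1) * x (v i 1) + Eps (b i 2) * x (v i 2) + x₀

theorem sPhiH_eq_sum_clauseForm (x₀ : ℝ) (x : Fin n → ℝ) :
    sPhiH v b x₀ x = ∑ i, x₀ ^ 2 * clauseForm v b i x₀ x ^ 2 + ∑ j, (x₀ ^ 2 - x j ^ 2) ^ 2 :=
  rfl

theorem sPhiH_nonneg (x₀ : ℝ) (x : Fin n → ℝ) : 0 ≤ sPhiH v b x₀ x := by
  rw [sPhiH_eq_sum_clauseForm]
  positivity

theorem sPhiH_smul (c x₀ : ℝ) (x : Fin n → ℝ) :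
    sPhiH v b (c * x₀) (c • x) = c ^ 4 * sPhiH v b x₀ x := by
  simp only [sPhiH, Pi.smul_apply, smul_eq_mul, mul_add, Finset.mul_sum]
  congr 1 <;> exact Finset.sum_congr rfl fun _ _ => by ring

theorem continuous_sPhiH : Continuous fun q : ℝ × (Fin n → ℝ) => sPhiH v b q.1 q.2 := by
  unfold sPhiH
  fun_prop

theorem sPhiH_eq_zero_iff (x₀ : ℝ) (x : Fin n → ℝ) :
    sPhiH v b x₀ x = 0 ↔
      (∀ i, x₀ = 0 ∨ clauseForm v b i x₀ x = 0) ∧ ∀ j, x j ^ 2 = x₀ ^ 2 := by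
  rw [sPhiH_eq_sum_clauseForm, add_eq_zero_iff_of_nonneg (by positivity) (by positivity),
    Finset.sum_eq_zero_iff_of_nonneg (fun _ _ => by positivity),
    Finset.sum_eq_zero_iff_of_nonneg (fun _ _ => by positivity)]
  simp [sub_eq_zero, eq_comm]

theorem sPhiH_one_eps_eq_zero_iff (a : Fin n → Bool) :
    sPhiH v b 1 (fun j => Eps (a j)) = 0 ↔ ∀ i, ∃! t, a (v i t) = b i t := by
  have hsq (c : Bool) : Eps c ^ 2 = 1 ^ 2 := by cases c <;> norm_num [Eps]
  simp only [sPhiH_eq_zero_iff, one_ne_zero, false_or, hsq, implies_true, and_true, clauseForm,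
    mul_comm (Eps (b _ _)), eps_mul_eps]
  exact forall_congr' fun i => by
    simpa using eps_add_eps_add_eps_add_one_eq_zero_iff fun t => a (v i t) == b i t

theorem oneInThreeSat_iff_exists_sPhiH_eq_zero :
    OneInThreeSat v b ↔ ∃ q : ℝ × (Fin n → ℝ), q ≠ 0 ∧ sPhiH v b q.1 q.2 = 0 := by
  constructor
  · rintro ⟨a, ha⟩
    exact ⟨(1, fun j => Eps (a j)), by simp, (sPhiH_one_eps_eq_zero_iff v b a).mpr ha⟩
  · rintro ⟨⟨x₀, x⟩, hq, hzero⟩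
    have hsq := ((sPhiH_eq_zero_iff v b x₀ x).mp hzero).2
    have hx₀ : x₀ ≠ 0 := by
      rintro rfl
      exact hq (Prod.ext rfl (funext fun j => by simpa using hsq j))
    -- each `x j` is `± x₀`, so `x` is `x₀` times the sign vector of `a`
    set a : Fin n → Bool := fun j => decide (x j = x₀)
    have hx : x = x₀ • fun j => Eps (a j) := by
      funext j
      rcases sq_eq_sq_iff_eq_or_eq_neg.mp (hsq j) with h | h <;>
        simp [a, Eps, h]
    refine ⟨a, (sPhiH_one_eps_eq_zero_iff v b a).mp ?_⟩
    have := sPhiH_smul v b x₀ 1 fun j => Eps (a j)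
    rw [mul_one, ← hx, hzero] at this
    exact (mul_eq_zero.mp this.symm).resolve_left (pow_ne_zero 4 hx₀)

end Instance

theorem sPhiH_coercive_iff_not_satisfiable {n k : ℕ}
    (v : Fin k → Fin 3 → Fin n) (b : Fin k → Fin 3 → Bool) :
    Tendsto (fun q : ℝ × (Fin n → ℝ) => sPhiH v b q.1 q.2)
      (Bornology.cobounded (ℝ × (Fin n → ℝ))) atTop ↔ ¬ OneInThreeSat v b := by
  rw [oneInThreeSat_iff_exists_sPhiH_eq_zero]
  exact tendsto_cobounded_atTop_iff_of_homogeneous four_ne_zero (continuous_sPhiH v b)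
    (fun q => sPhiH_nonneg v b q.1 q.2) fun c _ q => sPhiH_smul v b c q.1 q.2
end

section
/- The set S = {(x₁, x₂) ∈ ℝ² : (x₁ - x₂)^4 + (x₁ + x₂)^2 ≤ 1} is compact, while for every ε > 0 the perturbed set S_ε = {(x₁, x₂) ∈ ℝ² : (x₁ - x₂)^4 - ε·x₁^4 + (x₁ + x₂)^2 ≤ 1} is unbounded. -/
/-!
On `S` both `(x₀ - x₁)²` and `(x₀ + x₁)²` are at most `1`, so `‖x‖² = ((x₀ - x₁)² + (x₀ + x₁)²) / 2 ≤ 1`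
and `S` is a closed subset of the unit ball. On the diagonal `x₀ = x₁ = t` the polynomial defining
`S_ε` equals `t² (4 - ε t²)`, which is negative once `ε t² ≥ 4`, so `S_ε` contains a ray of the
diagonal.
-/

open Filter Bornology Metric

theorem Filter.Tendsto.not_isBounded_of_eventually_mem {α β : Type*} [Bornology α]
    {l : Filter β} [l.NeBot] {f : β → α} {s : Set α} (hf : Tendsto f l (cobounded α))
    (hs : ∀ᶠ t in l, f t ∈ s) : ¬ Bornology.IsBounded s := fun hb =>
  (map_neBot : (map f l).NeBot).ne <| disjoint_self.mp <|
    (hb.disjoint_cobounded (l := map f l) hs).mono_right hf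

namespace EuclideanSpace

theorem norm_sq_fin_two (x : EuclideanSpace ℝ (Fin 2)) : ‖x‖ ^ 2 = x 0 ^ 2 + x 1 ^ 2 := by
  simp [real_norm_sq_eq, Fin.sum_univ_two]

theorem tendsto_diagonal_cobounded :
    Tendsto (fun t : ℝ => !₂[t, t]) atTop (cobounded (EuclideanSpace ℝ (Fin 2))) := by
  rw [← tendsto_norm_atTop_iff_cobounded]
  refine tendsto_atTop_mono (fun t => ?_) tendsto_id
  have h : t ^ 2 ≤ ‖!₂[t, t]‖ ^ 2 := by simp [norm_sq_fin_two]; positivity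
  exact (le_abs_self t).trans (abs_le_of_sq_le_sq h (norm_nonneg _))

end EuclideanSpace

theorem quartic_sublevel_subset_closedBall :
    {x : EuclideanSpace ℝ (Fin 2) | (x 0 - x 1) ^ 4 + (x 0 + x 1) ^ 2 ≤ 1} ⊆ closedBall 0 1 := by
  rintro x (hx : (x 0 - x 1) ^ 4 + (x 0 + x 1) ^ 2 ≤ 1)
  have hdiff : (x 0 - x 1) ^ 2 ≤ 1 := by nlinarith [sq_nonneg (x 0 - x 1), sq_nonneg (x 0 + x 1)]
  have hsum : (x 0 + x 1) ^ 2 ≤ 1 := by nlinarith [sq_nonneg ((x 0 - x 1) ^ 2)]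
  have hnorm : ‖x‖ ^ 2 ≤ 1 := by rw [EuclideanSpace.norm_sq_fin_two]; nlinarith
  simpa [mem_closedBall] using (sq_le_one_iff₀ (norm_nonneg x)).mp hnorm

theorem isCompact_quartic_sublevel :
    IsCompact {x : EuclideanSpace ℝ (Fin 2) | (x 0 - x 1) ^ 4 + (x 0 + x 1) ^ 2 ≤ 1} :=
  isCompact_of_isClosed_isBounded (isClosed_le (by fun_prop) continuous_const)
    (isBounded_closedBall.subset quartic_sublevel_subset_closedBall)

theorem eventually_diagonal_mem_perturbed_sublevel {ε : ℝ} (hε : 0 < ε) :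
    ∀ᶠ t : ℝ in atTop, !₂[t, t] ∈
      {x : EuclideanSpace ℝ (Fin 2) | (x 0 - x 1) ^ 4 - ε * x 0 ^ 4 + (x 0 + x 1) ^ 2 ≤ 1} := by
  filter_upwards [(tendsto_id.const_mul_atTop hε).eventually_ge_atTop 2,
    eventually_ge_atTop 2] with t (hεt : 2 ≤ ε * t) ht
  have hεt2 : 4 ≤ ε * t ^ 2 := by nlinarith
  calc (t - t) ^ 4 - ε * t ^ 4 + (t + t) ^ 2 = t ^ 2 * (4 - ε * t ^ 2) := by ring
    _ ≤ 1 := by nlinarith [sq_nonneg t]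

theorem compact_but_not_stably_compact_example :
    IsCompact {x : EuclideanSpace ℝ (Fin 2) | (x 0 - x 1) ^ 4 + (x 0 + x 1) ^ 2 ≤ 1} ∧
    ∀ ε : ℝ, 0 < ε →
      ¬ Bornology.IsBounded
        {x : EuclideanSpace ℝ (Fin 2) |
          (x 0 - x 1) ^ 4 - ε * x 0 ^ 4 + (x 0 + x 1) ^ 2 ≤ 1} :=
  ⟨isCompact_quartic_sublevel, fun _ hε =>
    EuclideanSpace.tendsto_diagonal_cobounded.not_isBounded_of_eventually_mem
      (eventually_diagonal_mem_perturbed_sublevel hε)⟩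
end

section
/- Suppose there exist a sum-of-squares polynomial σ̃₀ and polynomials ṽ_i (i ∈ Fin k), t̃_j (j ∈ Fin n) in ℝ[X] such that -1 = σ̃₀ + Σ_{i ∈ Fin k} ṽ_i · C_i + Σ_{j ∈ Fin n} t̃_j · (1 - X_j²) as polynomials. Then there exist a sum-of-squares polynomial σ₀ and polynomials v_i (i ∈ Fin k), t_j (j ∈ Fin n) in ℝ[X, Y] such that n - Σ_{j ∈ Fin n} X_j² - Y² = σ₀ + Σ_{i ∈ Fin k} v_i · (C_i · Y) + Σ_{j ∈ Fin n} t_j · (1 - X_j²) as polynomials in ℝ[X, Y] (with each C_i viewed in ℝ[X, Y], and n denoting the constant polynomial). -/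
open Finset Filter

open MvPolynomial

/-- A real polynomial is a sum of squares. -/
def IsSos {σ : Type*} (p : MvPolynomial σ ℝ) : Prop :=
  ∃ (r : ℕ) (q : Fin r → MvPolynomial σ ℝ), p = ∑ l : Fin r, q l ^ 2

/-- The clause polynomial `C_i = ε i 0 · X_{v i 0} + ε i 1 · X_{v i 1} + ε i 2 · X_{v i 2} + 1`
in `ℝ[X]`. -/
noncomputable def Cpoly {n k : ℕ} (v : Fin k → Fin 3 → Fin n) (b : Fin k → Fin 3 → Bool)
    (i : Fin k) : MvPolynomial (Fin n) ℝ :=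
  C (Eps (b i 0)) * X (v i 0) + C (Eps (b i 1)) * X (v i 1) + C (Eps (b i 2)) * X (v i 2) + 1

theorem nullstellensatz_certificate_lifts_to_archimedean_certificate {n k : ℕ}
    (v : Fin k → Fin 3 → Fin n) (b : Fin k → Fin 3 → Bool)
    (σt : MvPolynomial (Fin n) ℝ) (vt : Fin k → MvPolynomial (Fin n) ℝ)
    (tt : Fin n → MvPolynomial (Fin n) ℝ) (hσt : IsSos σt)
    (hid : (-1 : MvPolynomial (Fin n) ℝ) =
      σt + (∑ i : Fin k, vt i * Cpoly v b i) + ∑ j : Fin n, tt j * (1 - X j ^ 2)) :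
    ∃ (σ₀ : MvPolynomial (Fin n ⊕ Unit) ℝ) (vv : Fin k → MvPolynomial (Fin n ⊕ Unit) ℝ)
      (t : Fin n → MvPolynomial (Fin n ⊕ Unit) ℝ),
      IsSos σ₀ ∧
      C (n : ℝ) - (∑ j : Fin n, X (Sum.inl j) ^ 2) - X (Sum.inr ()) ^ 2 =
        σ₀ + (∑ i : Fin k, vv i * (rename Sum.inl (Cpoly v b i) * X (Sum.inr ())))
           + ∑ j : Fin n, t j * (1 - X (Sum.inl j) ^ 2) := by
  classical
  obtain ⟨r, q, hq⟩ := hσt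
  set Y : MvPolynomial (Fin n ⊕ Unit) ℝ := X (Sum.inr ()) with hY
  refine ⟨Y ^ 2 * rename Sum.inl σt, fun i => Y * rename Sum.inl (vt i),
    fun j => 1 + Y ^ 2 * rename Sum.inl (tt j), ?_, ?_⟩
  · refine ⟨r, fun l => Y * rename Sum.inl (q l), ?_⟩
    rw [hq, map_sum, Finset.mul_sum]
    refine Finset.sum_congr rfl fun l _ => ?_
    rw [map_pow]; ring
  · have h := congrArg (rename (Sum.inl : Fin n → Fin n ⊕ Unit)) hid
    simp only [map_neg, map_one, map_add, map_sum, map_mul, map_sub, map_pow,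
      rename_X] at h
    have c1 : ∀ i ∈ Finset.univ, Y ^ 2 * (rename Sum.inl (vt i) * rename Sum.inl (Cpoly v b i))
        = (Y * rename Sum.inl (vt i)) * (rename Sum.inl (Cpoly v b i) * Y) := by
      intros; ring
    have c2 : ∀ j ∈ Finset.univ, (1 + Y ^ 2 * rename Sum.inl (tt j)) * (1 - X (Sum.inl j) ^ 2)
        = (1 - X (Sum.inl j) ^ 2) + Y ^ 2 * (rename Sum.inl (tt j) * (1 - X (Sum.inl j) ^ 2)) := by
      intros; ring
    have base : (C (n : ℝ) : MvPolynomial (Fin n ⊕ Unit) ℝ)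
        - (∑ j : Fin n, X (Sum.inl j) ^ 2)
        = ∑ j : Fin n, (1 - X (Sum.inl j) ^ 2) := by
      rw [Finset.sum_sub_distrib]
      simp [Finset.card_univ, Nat.smul_one_eq_cast]
    calc (C (n : ℝ) : MvPolynomial (Fin n ⊕ Unit) ℝ)
          - (∑ j : Fin n, X (Sum.inl j) ^ 2) - Y ^ 2
        = (∑ j : Fin n, (1 - X (Sum.inl j) ^ 2)) + Y ^ 2 * (-1) := by
          rw [base]; ring
      _ = _ := by
          rw [h, Finset.sum_congr rfl c2, Finset.sum_add_distrib]
          simp only [mul_add, Finset.mul_sum]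
          rw [Finset.sum_congr rfl c1]
          ring
end
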